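/- arXiv:1508.03080 — 3 statements merged into one kernel-verified Lean document; each statement's English description precedes it below -/
import Mathlib

section
/- If the inverse hazard rate I(v) = (1-F(v))/f(v) is strictly decreasing and differentiable, then the discriminatory-equilibrium price p₁(q), defined implicitly by p₁(q) = I(p₁(q) + (1-2q)δ) with δ > 0, satisfies p₁'(q) > 0 and the cutoff v*(q) = p₁(q) + (1-2q)δ satisfies v*'(q) < 0. -/
/-- If the inverse hazard rate `I` is differentiable with everywhere negative
derivative (strictly decreasing), and the discriminatory-equilibrium price `p₁`
is differentiable and satisfies `p₁(q) = I(p₁(q) + (1-2q)δ)` with `δ > 0`, then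
`p₁'(q) > 0` and the cutoff `v*(q) = p₁(q) + (1-2q)δ` has derivative
`p₁'(q) - 2δ < 0`. -/
theorem discriminatory_price_increasing_cutoff_decreasing
    (I I' p₁ p₁' : ℝ → ℝ) (δ : ℝ) (hδ : 0 < δ)
    (hI : ∀ v, HasDerivAt I (I' v) v) (hI' : ∀ v, I' v < 0)
    (hp₁ : ∀ q, HasDerivAt p₁ (p₁' q) q)
    (heq : ∀ q, p₁ q = I (p₁ q + (1 - 2*q) * δ)) :
    ∀ q ∈ Set.Icc (1/2 : ℝ) 1,
      0 < p₁' q ∧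
      HasDerivAt (fun q => p₁ q + (1 - 2*q) * δ) (p₁' q - 2*δ) q ∧
      p₁' q - 2*δ < 0 := by
  intro q _
  -- derivative of the cutoff
  have hg : HasDerivAt (fun q => p₁ q + (1 - 2*q) * δ) (p₁' q - 2*δ) q := by
    have h1 : HasDerivAt (fun q : ℝ => (1 - 2*q) * δ) (-2*δ) q := by
      have : HasDerivAt (fun q : ℝ => 1 - 2*q) (-2) q := by
        simpa using ((hasDerivAt_id q).const_mul (2:ℝ)).const_sub 1
      simpa using this.mul_const δ
    have := (hp₁ q).add h1
    exact this.congr_deriv (by ring)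
  set a := I' (p₁ q + (1 - 2*q) * δ) with ha
  have haneg : a < 0 := hI' _
  -- chain rule: p₁ = I ∘ cutoff
  have hcomp : HasDerivAt p₁ (a * (p₁' q - 2*δ)) q := by
    have := (hI (p₁ q + (1 - 2*q) * δ)).comp q hg
    have hfun : (fun q => I (p₁ q + (1 - 2*q) * δ)) = p₁ := by
      funext x; exact (heq x).symm
    rw [show (I ∘ fun q => p₁ q + (1 - 2*q) * δ) = p₁ from funext fun x => (heq x).symm] at this
    exact this
  have hkey : p₁' q = a * (p₁' q - 2*δ) := (hp₁ q).unique hcomp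
  have h1a : 0 < 1 - a := by linarith
  have hformula : p₁' q = -2*δ*a / (1 - a) := by
    field_simp
    linarith [hkey]
  constructor
  · rw [hformula]
    apply div_pos _ h1a
    nlinarith
  refine ⟨hg, ?_⟩
  have : p₁' q - 2*δ = -2*δ / (1 - a) := by
    rw [hformula]; field_simp; ring
  rw [this]
  apply div_neg_of_neg_of_pos _ h1a
  linarith
end

section
/- If a discriminatory equilibrium and a uniform advertising equilibrium A coexist at the same q ∈ (1/2, 1], then every consumer, regardless of value v, weakly prefers the uniform equilibrium A (strictly if she purchases), while the seller strictly prefers the discriminatory equilibrium: the seller's profit p₁(q)(1-F(v*(q))) exceeds p_M(1-F(p_M)). -/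
/-!
Under equilibrium A every consumer sees the ad and pays `p_M < p₁`. A buyer in the
discriminatory equilibrium pays more and sees the ad only with probability `q ≤ 1`; a
non-buyer gets at most `δ`. The seller, on the other hand, charges the higher price `p₁`
and, because the cutoff `v*` lies below `p_M`, sells to at least as many consumers.
-/

section Consumer

variable {δ q pM p₁ : ℝ}

theorem buyer_payoff_lt_uniform (hδ : 0 ≤ δ) (hq : q ≤ 1) (hp : pM < p₁) (v : ℝ) :
    v - p₁ + q * δ < max (v - pM) 0 + δ :=
  calc v - p₁ + q * δ < v - pM + δ := by nlinarith
    _ ≤ max (v - pM) 0 + δ := by gcongr; exact le_max_left _ _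

theorem nonbuyer_payoff_le_uniform (hδ : 0 ≤ δ) (hq : 0 ≤ q) (v : ℝ) :
    (1 - q) * δ ≤ max (v - pM) 0 + δ :=
  calc (1 - q) * δ ≤ 0 + δ := by nlinarith
    _ ≤ max (v - pM) 0 + δ := by gcongr; exact le_max_right _ _

end Consumer

theorem revenue_lt_of_lt_price_of_le_cutoff {F : ℝ → ℝ} (hF : Monotone F) {c c' p p' : ℝ}
    (hc : c ≤ c') (hFc' : F c' < 1) (hp : 0 ≤ p) (hpp' : p < p') :
    p * (1 - F c') < p' * (1 - F c) :=
  calc p * (1 - F c') < p' * (1 - F c') := mul_lt_mul_of_pos_right hpp' (by linarith)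
    _ ≤ p' * (1 - F c) := mul_le_mul_of_nonneg_left (by linarith [hF hc]) (by linarith)

theorem coexist_A_preferences_general (δ q pM p₁ vs : ℝ) (F : ℝ → ℝ)
    (hδ : 0 < δ) (hq : q ∈ Set.Ioc (1/2 : ℝ) 1)
    (hlt : vs < pM) (hgt : pM < p₁) (hpM : 0 < pM)
    (hF : Monotone F) (hF1 : F pM < 1) :
    (∀ v : ℝ,
      (if vs ≤ v then v - p₁ + q * δ else (1 - q) * δ) ≤ max (v - pM) 0 + δ) ∧
    (∀ v : ℝ, vs ≤ v → (v - p₁ + q * δ) < max (v - pM) 0 + δ) ∧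
    pM * (1 - F pM) < p₁ * (1 - F vs) := by
  obtain ⟨hq_half, hq_one⟩ := hq
  have buyer (v : ℝ) := buyer_payoff_lt_uniform hδ.le hq_one hgt v
  refine ⟨fun v => ?_, fun v _ => buyer v,
    revenue_lt_of_lt_price_of_le_cutoff hF hlt.le hF1 hpM.le hgt⟩
  split_ifs
  · exact (buyer v).le
  · exact nonbuyer_payoff_le_uniform hδ.le (by linarith) v

/-- If a discriminatory equilibrium (price `p₁`, cutoff `v* = p₁ + (1-2q)δ < p_M`)
and a uniform advertising equilibrium A (price `p_M < p₁`) coexist at the same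
`q ∈ (1/2,1]`, then every consumer weakly prefers the uniform equilibrium A
(strictly if she purchases, i.e. `v ≥ v*`), while the seller strictly prefers the
discriminatory equilibrium: `p_M(1 - F(p_M)) < p₁(1 - F(v*))`. -/
theorem coexist_A_preferences (δ q pM p₁ vs : ℝ) (F : ℝ → ℝ)
    (hδ : 0 < δ) (hq : q ∈ Set.Ioc (1/2 : ℝ) 1)
    (hvs : vs = p₁ + (1 - 2*q) * δ)
    (hlt : vs < pM) (hgt : pM < p₁) (hpM : 0 < pM)
    (hF : Monotone F) (hF1 : F pM < 1) :
    (∀ v : ℝ,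
      (if vs ≤ v then v - p₁ + q * δ else (1 - q) * δ) ≤ max (v - pM) 0 + δ) ∧
    (∀ v : ℝ, vs ≤ v → (v - p₁ + q * δ) < max (v - pM) 0 + δ) ∧
    pM * (1 - F pM) < p₁ * (1 - F vs) :=
  coexist_A_preferences_general δ q pM p₁ vs F hδ hq hlt hgt hpM hF hF1
end

section
/- If a discriminatory equilibrium and a uniform advertising equilibrium B coexist at the same q, ex-ante consumer welfare is weakly higher under the discriminatory equilibrium: ∫_{v*(q)}^1 (v - v*(q)) f(v) dv + (1-q)δ ≥ ∫_{p_M}^1 (v - p_M) f(v) dv. -/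
open MeasureTheory Set

theorem antitoneOn_integral_sub_mul {f : ℝ → ℝ} {a b : ℝ}
    (hf_nonneg : ∀ v ∈ Icc a b, 0 ≤ f v) (hf_int : IntervalIntegrable f volume a b) :
    AntitoneOn (fun c => ∫ v in c..b, (v - c) * f v) (Icc a b) := by
  intro c hc d hd hcd
  have hint : ∀ e x y, x ∈ Icc a b → y ∈ Icc a b →
      IntervalIntegrable (fun v => (v - e) * f v) volume x y := fun e x y hx hy =>
    (hf_int.mono_set (uIcc_subset_uIcc (Icc_subset_uIcc hx) (Icc_subset_uIcc hy))).continuousOn_mul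
      (by fun_prop)
  have hb : b ∈ Icc a b := ⟨hc.1.trans hc.2, le_rfl⟩
  have hsplit : ∫ v in c..b, (v - c) * f v =
      (∫ v in c..d, (v - c) * f v) + ∫ v in d..b, (v - c) * f v :=
    (intervalIntegral.integral_add_adjacent_intervals (hint c c d hc hd) (hint c d b hd hb)).symm
  have hlow : 0 ≤ ∫ v in c..d, (v - c) * f v :=
    intervalIntegral.integral_nonneg hcd fun v hv =>
      mul_nonneg (sub_nonneg.2 hv.1) (hf_nonneg v ⟨hc.1.trans hv.1, hv.2.trans hd.2⟩)
  have hhigh : ∫ v in d..b, (v - d) * f v ≤ ∫ v in d..b, (v - c) * f v :=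
    intervalIntegral.integral_mono_on hd.2 (hint d d b hd hb) (hint c d b hd hb) fun v hv =>
      mul_le_mul_of_nonneg_right (by linarith) (hf_nonneg v ⟨hd.1.trans hv.1, hv.2⟩)
  show ∫ v in d..b, (v - d) * f v ≤ ∫ v in c..b, (v - c) * f v
  linarith

/-- If a discriminatory equilibrium and a uniform advertising equilibrium B coexist
at the same `q`, ex-ante consumer welfare is weakly higher under the discriminatory
equilibrium: `∫_{v*}^1 (v - v*) f + (1-q)δ ≥ ∫_{p_M}^1 (v - p_M) f`, using
`v* ≤ p_M` and `(1-q)δ ≥ 0`. -/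
theorem coexist_B_welfare (δ q pM vs : ℝ) (f : ℝ → ℝ)
    (hδ : 0 < δ) (hq : q ∈ Set.Icc (1/2 : ℝ) 1)
    (hf_nonneg : ∀ v ∈ Set.Icc (0:ℝ) 1, 0 ≤ f v)
    (hf_int : IntervalIntegrable f MeasureTheory.volume 0 1)
    (h0vs : 0 ≤ vs) (hvspM : vs ≤ pM) (hpM1 : pM ≤ 1) :
    (∫ v in vs..(1:ℝ), (v - vs) * f v) + (1 - q) * δ ≥
      ∫ v in pM..(1:ℝ), (v - pM) * f v := by
  have hsurplus : ∫ v in pM..(1:ℝ), (v - pM) * f v ≤ ∫ v in vs..(1:ℝ), (v - vs) * f v :=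
    antitoneOn_integral_sub_mul hf_nonneg hf_int ⟨h0vs, hvspM.trans hpM1⟩
      ⟨h0vs.trans hvspM, hpM1⟩ hvspM
  have hbonus : 0 ≤ (1 - q) * δ := mul_nonneg (sub_nonneg.2 hq.2) hδ.le
  linarith
end
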